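/- If A|B is an H-separable ring extension, then the map A ⊗_Z R^{op} → End(A_B) sending a ⊗ r to λ_a ρ_r (left multiplication by a composed with right multiplication by r) is a ring isomorphism, with inverse f ↦ Σ_i f(e_i^1) e_i^2 ⊗ r_i. -/

import Mathlib

set_option synthInstance.maxHeartbeats 1000000
set_option maxHeartbeats 1000000



open TensorProduct

noncomputable section

namespace D2

variable (A : Type*) [Ring A] (B : Subring A)

/-- The defining relations of `A ⊗_B A` as a quotient of `A ⊗_ℤ A`. -/
def relSub : Submodule ℤ (A ⊗[ℤ] A) :=
  Submodule.span ℤ {x | ∃ (a c : A) (b : B), x = (a * (b : A)) ⊗ₜ[ℤ] c - a ⊗ₜ[ℤ] ((b : A) * c)}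

/-- The tensor square `A ⊗_B A` of a ring extension `B ⊆ A`. -/
abbrev TensorSq := (A ⊗[ℤ] A) ⧸ relSub A B

/-- The class of a simple tensor `a ⊗_B c`. -/
def tmulB (a c : A) : TensorSq A B := Submodule.Quotient.mk (a ⊗ₜ[ℤ] c)

/-- Left multiplication `a₀ • (x ⊗ y) = (a₀ x) ⊗ y` on `A ⊗_B A`. -/
def lmul (a : A) : TensorSq A B →ₗ[ℤ] TensorSq A B :=
  Submodule.mapQ _ _ (TensorProduct.map (LinearMap.mulLeft ℤ a) LinearMap.id) (by
    rw [relSub, Submodule.span_le]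
    rintro x ⟨a', c, b, rfl⟩
    simp only [SetLike.mem_coe, Submodule.mem_comap, map_sub, TensorProduct.map_tmul,
      LinearMap.mulLeft_apply, LinearMap.id_apply]
    refine Submodule.subset_span ⟨a * a', c, b, ?_⟩
    erw [map_sub, TensorProduct.map_tmul, TensorProduct.map_tmul]
    simp only [LinearMap.mulLeft_apply, LinearMap.id_apply, mul_assoc])

/-- Right multiplication `(x ⊗ y) • a₀ = x ⊗ (y a₀)` on `A ⊗_B A`. -/
def rmul (a : A) : TensorSq A B →ₗ[ℤ] TensorSq A B :=
  Submodule.mapQ _ _ (TensorProduct.map LinearMap.id (LinearMap.mulRight ℤ a)) (by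
    rw [relSub, Submodule.span_le]
    rintro x ⟨a', c, b, rfl⟩
    simp only [SetLike.mem_coe, Submodule.mem_comap, map_sub, TensorProduct.map_tmul,
      LinearMap.mulRight_apply, LinearMap.id_apply]
    refine Submodule.subset_span ⟨a', c * a, b, ?_⟩
    erw [map_sub, TensorProduct.map_tmul, TensorProduct.map_tmul]
    simp only [LinearMap.mulRight_apply, LinearMap.id_apply, mul_assoc])

/-- The multiplication map `A ⊗_B A → A`, `x ⊗ y ↦ x y`. -/
def mulQ : TensorSq A B →ₗ[ℤ] A :=
  Submodule.liftQ _ (LinearMap.mul' ℤ A) (by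
    rw [relSub, Submodule.span_le]
    rintro x ⟨a, c, b, rfl⟩
    erw [SetLike.mem_coe, LinearMap.mem_ker, map_sub, LinearMap.mul'_apply, LinearMap.mul'_apply]
    simp [mul_assoc])

/-- An element `t` of `A ⊗_B A` is `B`-central when `b t = t b` for all `b ∈ B`. -/
def IsBCentral (t : TensorSq A B) : Prop := ∀ b ∈ B, lmul A B b t = rmul A B b t

/-- An element `t` of `A ⊗_B A` is `A`-central (a Casimir element) when `a t = t a`. -/
def IsACentral (t : TensorSq A B) : Prop := ∀ a : A, lmul A B a t = rmul A B a t

/-- A `B`-`B`-bimodule endomorphism of `A`. -/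
def IsBB (α : A →ₗ[ℤ] A) : Prop :=
  ∀ b ∈ B, ∀ a : A, α ((b : A) * a) = b * α a ∧ α (a * b) = α a * b

/-- A right `B`-module endomorphism of `A`. -/
def IsRightB (f : A →ₗ[ℤ] A) : Prop := ∀ a : A, ∀ b ∈ B, f (a * b) = f a * b

/-- `x ↦ (x·) ⊗ id` as a linear map, used to build Sweedler-type expressions. -/
def lmulTen : A →ₗ[ℤ] (A ⊗[ℤ] A) →ₗ[ℤ] (A ⊗[ℤ] A) where
  toFun a := TensorProduct.map (LinearMap.mulLeft ℤ a) LinearMap.id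
  map_add' a a' := by
    apply TensorProduct.ext'
    intro x y
    simp [add_mul, TensorProduct.add_tmul]
    rfl
  map_smul' z a := by
    apply TensorProduct.ext'
    intro x y
    erw [LinearMap.smul_apply, TensorProduct.map_tmul, TensorProduct.map_tmul]
    simp only [TensorProduct.map_tmul, LinearMap.mulLeft_apply, LinearMap.id_apply,
      LinearMap.smul_apply, RingHom.id_apply, smul_mul_assoc, TensorProduct.smul_tmul']

/-- For `ζ = Σ u ⊗ v`, the map `a ↦ Σ α(a u) v`, i.e. `α(? ζ¹) ζ²`. -/
def sweed (α : A →ₗ[ℤ] A) (ζ : A ⊗[ℤ] A) : A →ₗ[ℤ] A :=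
  ((LinearMap.mul' ℤ A).comp (TensorProduct.map α LinearMap.id)).comp ((lmulTen A).flip ζ)

/-- For `ζ = Σ u ⊗ v`, the element `Σ u r v` ("sandwich" evaluation `ζ¹ r ζ²`). -/
def sandw (r : A) (ζ : A ⊗[ℤ] A) : A :=
  (LinearMap.mul' ℤ A) ((TensorProduct.map (LinearMap.mulRight ℤ r) LinearMap.id) ζ)

/-- `mul₂ ζ ξ = Σ (u x) ⊗ (y v)` for `ζ = Σ u ⊗ v`, `ξ = Σ x ⊗ y`:
the product `ξ ·_T ζ` of two elements of `T = (A ⊗_B A)^B` on representatives. -/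
def mul₂ : (A ⊗[ℤ] A) →ₗ[ℤ] (A ⊗[ℤ] A) →ₗ[ℤ] (A ⊗[ℤ] A) :=
  TensorProduct.lift <| LinearMap.mk₂ ℤ
    (fun u v => TensorProduct.map (LinearMap.mulLeft ℤ u) (LinearMap.mulRight ℤ v))
    (fun u u' v => by
      apply TensorProduct.ext'
      intro x y
      simp [add_mul, TensorProduct.add_tmul]
      rfl)
    (fun z u v => by
      apply TensorProduct.ext'
      intro x y
      erw [LinearMap.smul_apply, TensorProduct.map_tmul, TensorProduct.map_tmul]
      simp only [TensorProduct.map_tmul, LinearMap.mulLeft_apply, LinearMap.mulRight_apply,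
        LinearMap.smul_apply, smul_mul_assoc, TensorProduct.smul_tmul'])
    (fun u v v' => by
      apply TensorProduct.ext'
      intro x y
      simp [mul_add, TensorProduct.tmul_add]
      rfl)
    (fun z u v => by
      apply TensorProduct.ext'
      intro x y
      erw [LinearMap.smul_apply, TensorProduct.map_tmul, TensorProduct.map_tmul]
      simp only [TensorProduct.map_tmul, LinearMap.mulLeft_apply, LinearMap.mulRight_apply,
        LinearMap.smul_apply, mul_smul_comm, TensorProduct.tmul_smul])

/-- `A` is balanced as a right `B`-module. -/
def RightBalanced : Prop :=
  ∀ φ : A →+ A,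
    (∀ f : A →+ A, (∀ a : A, ∀ b ∈ B, f (a * b) = f a * b) → ∀ a, φ (f a) = f (φ a)) →
    ∃ b ∈ B, ∀ a, φ a = a * b

end D2

end


open TensorProduct

noncomputable section

/-- The center of `A` maps centrally into the centralizer of `B`, making the latter a
central algebra over the former. -/
def centAlg {A : Type*} [Ring A] (B : Subring A) :
    Algebra (Subring.center A) (Subring.centralizer (B : Set A)) :=
  (Subring.inclusion (Subring.center_le_centralizer (B : Set A))).toAlgebra'
    (fun c x => Subtype.ext (by
      simpa using (Subring.mem_center_iff.mp c.2 (x : A)).symm))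

attribute [local instance] centAlg

/-- The ring `End(A_B)` of right `B`-module endomorphisms of `A`. -/
def EndB {A : Type*} [Ring A] (B : Subring A) : Subring (Module.End ℤ A) where
  carrier := {f | ∀ a : A, ∀ b ∈ B, f (a * b) = f a * b}
  one_mem' := by intro a b hb; rfl
  mul_mem' := by
    intro f g hf hg a b hb
    simp only [Module.End.mul_apply, hg a b hb, hf (g a) b hb]
  add_mem' := by
    intro f g hf hg a b hb
    simp [LinearMap.add_apply, hf a b hb, hg a b hb, add_mul]
  zero_mem' := by intro a b hb; simp
  neg_mem' := by intro f hf a b hb; simp [hf a b hb]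

/-- For `ζ = Σ u ⊗ v`, the element `Σ (f(u) v) ⊗ s` of `A ⊗_Z C_A(B)ᵒᵖ`. -/
def toTZ {A : Type*} [Ring A] (B : Subring A) (f : Module.End ℤ A)
    (s : (Subring.centralizer (B : Set A))ᵐᵒᵖ) :
    (A ⊗[ℤ] A) →ₗ[ℤ] (A ⊗[Subring.center A] (Subring.centralizer (B : Set A))ᵐᵒᵖ) :=
  (((TensorProduct.mk (Subring.center A) A
      ((Subring.centralizer (B : Set A))ᵐᵒᵖ)).flip s).toAddMonoidHom.toIntLinearMap).comp
    ((LinearMap.mul' ℤ A).comp (TensorProduct.map f LinearMap.id))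


namespace Stmt9Aux

variable {A : Type*} [Ring A] (B : Subring A)

/-- Lift a balanced linear map `A ⊗ℤ A → A` to the quotient `A ⊗_B A`. -/
def liftB (g : A ⊗[ℤ] A →ₗ[ℤ] A)
    (hg : ∀ (a c : A) (b : B), g ((a * (b : A)) ⊗ₜ[ℤ] c) = g (a ⊗ₜ[ℤ] ((b : A) * c))) :
    D2.TensorSq A B →ₗ[ℤ] A :=
  Submodule.liftQ _ g (by
    rw [D2.relSub, Submodule.span_le]
    rintro x ⟨a, c, b, rfl⟩
    simp only [SetLike.mem_coe, LinearMap.mem_ker, map_sub, sub_eq_zero]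
    exact hg a c b)

@[simp] lemma liftB_mk (g : A ⊗[ℤ] A →ₗ[ℤ] A) (hg) (x : A ⊗[ℤ] A) :
    liftB B g hg (Submodule.Quotient.mk x) = g x := rfl

lemma sq_ext {M : Type*} [AddCommGroup M] [Module ℤ M] {f g : D2.TensorSq A B →ₗ[ℤ] M}
    (h : ∀ x y : A, f (D2.tmulB A B x y) = g (D2.tmulB A B x y)) : f = g :=
  Submodule.linearMap_qext _ (TensorProduct.ext' fun x y => h x y)

@[simp] lemma lmul_tmulB (c x y : A) :
    D2.lmul A B c (D2.tmulB A B x y) = D2.tmulB A B (c * x) y := by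
  rfl

@[simp] lemma rmul_tmulB (c x y : A) :
    D2.rmul A B c (D2.tmulB A B x y) = D2.tmulB A B x (y * c) := by
  rfl

lemma lmul_mul (c d : A) :
    D2.lmul A B (c * d) = (D2.lmul A B c).comp (D2.lmul A B d) :=
  sq_ext B fun x y => by simp [mul_assoc]

/-- `x ⊗ y ↦ f(x) y` on `A ⊗_B A`, for `f` right `B`-linear. -/
def M0 (f : Module.End ℤ A) (hf : ∀ a : A, ∀ b ∈ B, f (a * b) = f a * b) :
    D2.TensorSq A B →ₗ[ℤ] A :=
  liftB B ((LinearMap.mul' ℤ A).comp (TensorProduct.map f LinearMap.id)) (fun a c b => by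
    show f (a * b) * c = f a * (b * c)
    rw [hf a b b.2, mul_assoc])

@[simp] lemma M0_tmulB (f hf) (x y : A) :
    M0 B f hf (D2.tmulB A B x y) = f x * y := rfl

/-- `x ⊗ y ↦ x s y` on `A ⊗_B A`, for `s` in the centralizer of `B`. -/
def Ssw (s : A) (hs : s ∈ Subring.centralizer (B : Set A)) :
    D2.TensorSq A B →ₗ[ℤ] A :=
  liftB B ((LinearMap.mul' ℤ A).comp
      (TensorProduct.map (LinearMap.mulRight ℤ s) LinearMap.id)) (fun a c b => by
    have hb : (b : A) * s = s * (b : A) := Subring.mem_centralizer_iff.mp hs b b.2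
    show a * b * s * c = a * s * (b * c)
    rw [mul_assoc a, hb]
    simp only [mul_assoc])

@[simp] lemma Ssw_tmulB (s hs) (x y : A) :
    Ssw B s hs (D2.tmulB A B x y) = x * s * y := rfl

lemma M0_rmul (f hf) (w : A) (t : D2.TensorSq A B) :
    M0 B f hf t * w = M0 B f hf (D2.rmul A B w t) := by
  have h : (LinearMap.mulRight ℤ w).comp (M0 B f hf) = (M0 B f hf).comp (D2.rmul A B w) :=
    sq_ext B fun x y => by simp [mul_assoc]
  exact congrArg (fun F => F t) h

lemma M0_lmul (f hf) (a : A) (hf' : ∀ x : A, ∀ b ∈ B,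
      (f.comp (LinearMap.mulLeft ℤ a)) (x * b) = (f.comp (LinearMap.mulLeft ℤ a)) x * b)
    (t : D2.TensorSq A B) :
    M0 B f hf (D2.lmul A B a t) = M0 B (f.comp (LinearMap.mulLeft ℤ a)) hf' t := by
  have h : (M0 B f hf).comp (D2.lmul A B a)
      = M0 B (f.comp (LinearMap.mulLeft ℤ a)) hf' :=
    sq_ext B fun x y => by simp
  exact congrArg (fun F => F t) h

lemma Ssw_lmul (s hs) (c : A) (t : D2.TensorSq A B) :
    Ssw B s hs (D2.lmul A B c t) = c * Ssw B s hs t := by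
  have h : (Ssw B s hs).comp (D2.lmul A B c) = (LinearMap.mulLeft ℤ c).comp (Ssw B s hs) :=
    sq_ext B fun x y => by simp [mul_assoc]
  exact congrArg (fun F => F t) h

lemma Ssw_rmul (s hs) (c : A) (t : D2.TensorSq A B) :
    Ssw B s hs (D2.rmul A B c t) = Ssw B s hs t * c := by
  have h : (Ssw B s hs).comp (D2.rmul A B c) = (LinearMap.mulRight ℤ c).comp (Ssw B s hs) :=
    sq_ext B fun x y => by simp [mul_assoc]
  exact congrArg (fun F => F t) h

lemma Ssw_central (s hs) {t : D2.TensorSq A B} (ht : D2.IsACentral A B t) (c : A) :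
    c * Ssw B s hs t = Ssw B s hs t * c := by
  rw [← Ssw_lmul, ht c, Ssw_rmul]

end Stmt9Aux

section Fwd

variable {A : Type*} [Ring A] (B : Subring A)

/-- The bi-additive map `a ↦ s ↦ λ_a ρ_s`. -/
def fwdF : A →+ (Subring.centralizer (B : Set A))ᵐᵒᵖ →+ Module.End ℤ A where
  toFun a :=
    { toFun := fun u => (LinearMap.mulLeft ℤ a).comp (LinearMap.mulRight ℤ (u.unop : A))
      map_zero' := by ext x; simp
      map_add' := fun u u' => by ext x; simp [mul_add] }
  map_zero' := by ext u x; simp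
  map_add' a a' := by ext u x; simp [add_mul]

lemma fwdF_balanced (z : Subring.center A) (a : A)
    (u : (Subring.centralizer (B : Set A))ᵐᵒᵖ) :
    fwdF B (z • a) u = fwdF B a (z • u) := by
  have hz : ∀ g : A, g * (z : A) = (z : A) * g := Subring.mem_center_iff.mp z.2
  ext x
  show ((z : A) * a) * (x * (u.unop : A)) = a * (x * ((z : A) * (u.unop : A)))
  rw [← mul_assoc x, hz x, mul_assoc (z : A) x, ← mul_assoc a, ← hz a, mul_assoc]

/-- The additive map `A ⊗_Z Rᵒᵖ → End ℤ A`. -/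
def fwdRaw : (A ⊗[Subring.center A] (Subring.centralizer (B : Set A))ᵐᵒᵖ) →+ Module.End ℤ A :=
  TensorProduct.liftAddHom (fwdF B) (fwdF_balanced B)

@[simp] lemma fwdRaw_tmul (a : A) (u : (Subring.centralizer (B : Set A))ᵐᵒᵖ) :
    fwdRaw B (a ⊗ₜ u) = (LinearMap.mulLeft ℤ a).comp (LinearMap.mulRight ℤ (u.unop : A)) :=
  TensorProduct.liftAddHom_tmul _ _ a u

lemma fwdRaw_mem (x : A ⊗[Subring.center A] (Subring.centralizer (B : Set A))ᵐᵒᵖ) :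
    fwdRaw B x ∈ EndB B := by
  refine TensorProduct.induction_on x ?_ ?_ ?_
  · rw [map_zero]; exact (EndB B).zero_mem
  · intro a u
    rw [fwdRaw_tmul]
    intro x b hb
    have hu : (b : A) * (u.unop : A) = (u.unop : A) * b :=
      Subring.mem_centralizer_iff.mp u.unop.2 b hb
    show a * (x * b * (u.unop : A)) = a * (x * (u.unop : A)) * b
    rw [mul_assoc x, hu, ← mul_assoc x, mul_assoc a]
  · intro x y hx hy
    rw [map_add]; exact (EndB B).add_mem hx hy

/-- The forward additive map into `End(A_B)`. -/
def fwd : (A ⊗[Subring.center A] (Subring.centralizer (B : Set A))ᵐᵒᵖ) →+ EndB B :=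
  AddMonoidHom.codRestrict (fwdRaw B) (EndB B) (fwdRaw_mem B)

@[simp] lemma fwd_tmul_coe (a : A) (u : (Subring.centralizer (B : Set A))ᵐᵒᵖ) :
    ((fwd B (a ⊗ₜ u) : EndB B) : Module.End ℤ A)
      = (LinearMap.mulLeft ℤ a).comp (LinearMap.mulRight ℤ (u.unop : A)) := by
  simp [fwd]

lemma toTZ_apply (f : Module.End ℤ A) (s : (Subring.centralizer (B : Set A))ᵐᵒᵖ)
    (x : A ⊗[ℤ] A) :
    toTZ B f s x
      = ((LinearMap.mul' ℤ A) ((TensorProduct.map f LinearMap.id) x)) ⊗ₜ[Subring.center A] s :=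
  rfl

lemma toTZ_add (f g : Module.End ℤ A) (s : (Subring.centralizer (B : Set A))ᵐᵒᵖ)
    (x : A ⊗[ℤ] A) :
    toTZ B (f + g) s x = toTZ B f s x + toTZ B g s x := by
  simp only [toTZ_apply, TensorProduct.map_add_left, LinearMap.add_apply, map_add,
    TensorProduct.add_tmul]

end Fwd

/-- for an H-separable extension, `A ⊗_Z R^op ≅ End(A_B)` via
`a ⊗ r ↦ λ_a ρ_r`, with inverse `f ↦ Σᵢ f(eᵢ¹) eᵢ² ⊗ rᵢ`. -/
theorem stmt9 {A : Type*} [Ring A] (B : Subring A)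
    (n : ℕ) (e : Fin n → A ⊗[ℤ] A) (r : Fin n → A)
    (hce : ∀ i, D2.IsACentral A B (Submodule.Quotient.mk (e i)))
    (hr : ∀ i, r i ∈ Subring.centralizer (B : Set A))
    (hsys : ∑ i, D2.lmul A B (r i) (Submodule.Quotient.mk (e i)) = D2.tmulB A B 1 1) :
    ∃ Φ : (A ⊗[Subring.center A] (Subring.centralizer (B : Set A))ᵐᵒᵖ) ≃+* (EndB B),
      (∀ (a : A) (s : Subring.centralizer (B : Set A)),
        ((Φ (a ⊗ₜ[Subring.center A] MulOpposite.op s) : EndB B) : Module.End ℤ A) =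
          (LinearMap.mulLeft ℤ a).comp (LinearMap.mulRight ℤ (s : A))) ∧
      (∀ f : EndB B, Φ.symm f =
        ∑ i, toTZ B (f : Module.End ℤ A) (MulOpposite.op ⟨r i, hr i⟩) (e i)) := by
  classical
  let ψfun : EndB B → A ⊗[Subring.center A] (Subring.centralizer (B : Set A))ᵐᵒᵖ :=
    fun f => ∑ i, toTZ B (f : Module.End ℤ A) (MulOpposite.op ⟨r i, hr i⟩) (e i)
  have hψadd : ∀ f g : EndB B, ψfun (f + g) = ψfun f + ψfun g := by
    intro f g
    simp only [ψfun]
    rw [← Finset.sum_add_distrib]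
    refine Finset.sum_congr rfl fun i _ => ?_
    have h : ((f + g : EndB B) : Module.End ℤ A) = (f : Module.End ℤ A) + g := rfl
    rw [h, toTZ_add]
  -- right inverse
  have key1 : ∀ f : EndB B, fwd B (ψfun f) = f := by
    intro f
    have hf : ∀ a : A, ∀ b ∈ B, (f : Module.End ℤ A) (a * b) = (f : Module.End ℤ A) a * b := f.2
    apply Subtype.ext
    apply LinearMap.ext
    intro a
    have hf' : ∀ x : A, ∀ b ∈ B,
        ((f : Module.End ℤ A).comp (LinearMap.mulLeft ℤ a)) (x * b)
          = ((f : Module.End ℤ A).comp (LinearMap.mulLeft ℤ a)) x * b := by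
      intro x b hb
      show (f : Module.End ℤ A) (a * (x * b)) = (f : Module.End ℤ A) (a * x) * b
      rw [← mul_assoc]
      exact hf (a * x) b hb
    have hval : ((fwd B (ψfun f) : EndB B) : Module.End ℤ A) a
        = ∑ i, (Stmt9Aux.M0 B (f : Module.End ℤ A) hf (Submodule.Quotient.mk (e i)))
            * (a * r i) := by
      simp only [ψfun, map_sum]
      rw [AddSubmonoidClass.coe_finset_sum, LinearMap.coe_sum, Finset.sum_apply]
      refine Finset.sum_congr rfl fun i _ => ?_
      rw [toTZ_apply, fwd_tmul_coe]
      rfl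
    rw [hval]
    have step : ∀ i : Fin n,
        Stmt9Aux.M0 B (f : Module.End ℤ A) hf (Submodule.Quotient.mk (e i)) * (a * r i)
          = Stmt9Aux.M0 B ((f : Module.End ℤ A).comp (LinearMap.mulLeft ℤ a)) hf'
              (D2.lmul A B (r i) (Submodule.Quotient.mk (e i))) := by
      intro i
      rw [Stmt9Aux.M0_rmul, ← hce i (a * r i), Stmt9Aux.lmul_mul, LinearMap.comp_apply,
        Stmt9Aux.M0_lmul B _ hf a hf']
    rw [Finset.sum_congr rfl fun i _ => step i, ← map_sum, hsys]
    show (f : Module.End ℤ A) (a * 1) * 1 = (f : Module.End ℤ A) a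
    rw [mul_one, mul_one]
  -- the "sandwich" elements are central
  have hσmem : ∀ (s : Subring.centralizer (B : Set A)) (i : Fin n),
      Stmt9Aux.Ssw B (s : A) s.2 (Submodule.Quotient.mk (e i)) ∈ Subring.center A := by
    intro s i
    rw [Subring.mem_center_iff]
    intro g
    exact Stmt9Aux.Ssw_central B (s : A) s.2 (hce i) g
  have hsum : ∀ s : Subring.centralizer (B : Set A),
      ∑ i, Stmt9Aux.Ssw B (s : A) s.2 (Submodule.Quotient.mk (e i)) * r i = (s : A) := by
    intro s
    have h1 : Stmt9Aux.Ssw B (s : A) s.2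
        (∑ i, D2.lmul A B (r i) (Submodule.Quotient.mk (e i))) = (s : A) := by
      rw [hsys]
      show (1 : A) * (s : A) * 1 = (s : A)
      rw [one_mul, mul_one]
    rw [map_sum] at h1
    refine Eq.trans ?_ h1
    refine Finset.sum_congr rfl fun i _ => ?_
    rw [Stmt9Aux.Ssw_lmul]
    exact (Stmt9Aux.Ssw_central B (s : A) s.2 (hce i) (r i)).symm
  -- left inverse on pure tensors
  have key2 : ∀ (a : A) (u : (Subring.centralizer (B : Set A))ᵐᵒᵖ),
      ψfun (fwd B (a ⊗ₜ u)) = a ⊗ₜ u := by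
    intro a u
    have hterm : ∀ i, toTZ B ((fwd B (a ⊗ₜ u) : EndB B) : Module.End ℤ A)
        (MulOpposite.op ⟨r i, hr i⟩) (e i)
        = a ⊗ₜ[Subring.center A]
            ((⟨Stmt9Aux.Ssw B (u.unop : A) u.unop.2 (Submodule.Quotient.mk (e i)),
                hσmem u.unop i⟩ : Subring.center A)
              • MulOpposite.op (⟨r i, hr i⟩ : Subring.centralizer (B : Set A))) := by
      intro i
      rw [toTZ_apply, fwd_tmul_coe]
      have hfc : (LinearMap.mul' ℤ A) ((TensorProduct.map
            ((LinearMap.mulLeft ℤ a).comp (LinearMap.mulRight ℤ (u.unop : A)))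
            LinearMap.id) (e i))
          = a * Stmt9Aux.Ssw B (u.unop : A) u.unop.2 (Submodule.Quotient.mk (e i)) := by
        have h : (LinearMap.mul' ℤ A).comp (TensorProduct.map
              ((LinearMap.mulLeft ℤ a).comp (LinearMap.mulRight ℤ (u.unop : A)))
              LinearMap.id)
            = ((LinearMap.mulLeft ℤ a).comp
                (Stmt9Aux.Ssw B (u.unop : A) u.unop.2)).comp (Submodule.mkQ _) := by
          apply TensorProduct.ext'
          intro x y
          show (a * (x * (u.unop : A))) * y = a * ((x * (u.unop : A)) * y)
          rw [mul_assoc]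
        exact congrArg (fun F => F (e i)) h
      rw [hfc]
      have hcen : a * Stmt9Aux.Ssw B (u.unop : A) u.unop.2 (Submodule.Quotient.mk (e i))
          = (⟨_, hσmem u.unop i⟩ : Subring.center A) • a :=
        Stmt9Aux.Ssw_central B (u.unop : A) u.unop.2 (hce i) a
      rw [hcen, TensorProduct.smul_tmul]
    simp only [ψfun, hterm]
    rw [← TensorProduct.tmul_sum]
    congr 1
    have hop : ∀ i : Fin n,
        (⟨Stmt9Aux.Ssw B (u.unop : A) u.unop.2 (Submodule.Quotient.mk (e i)),
            hσmem u.unop i⟩ : Subring.center A)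
          • MulOpposite.op (⟨r i, hr i⟩ : Subring.centralizer (B : Set A))
        = MulOpposite.op
            ((⟨Stmt9Aux.Ssw B (u.unop : A) u.unop.2 (Submodule.Quotient.mk (e i)),
                hσmem u.unop i⟩ : Subring.center A)
              • (⟨r i, hr i⟩ : Subring.centralizer (B : Set A))) := fun i => rfl
    rw [Finset.sum_congr rfl fun i _ => hop i, ← Finset.op_sum]
    rw [← MulOpposite.op_unop u]
    congr 1
    apply Subtype.ext
    rw [AddSubmonoidClass.coe_finset_sum]
    exact hsum u.unop
  refine ⟨{ toFun := fun x => fwd B x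
            invFun := ψfun
            left_inv := ?_
            right_inv := key1
            map_mul' := ?_
            map_add' := map_add (fwd B) }, ?_, ?_⟩
  · intro x
    show ψfun (fwd B x) = x
    refine TensorProduct.induction_on x ?_ ?_ ?_
    · rw [map_zero]
      simp only [ψfun]
      refine Finset.sum_eq_zero fun i _ => ?_
      have h : ((0 : EndB B) : Module.End ℤ A) = 0 := rfl
      rw [h, toTZ_apply]
      simp [TensorProduct.map_zero_left]
    · exact key2
    · intro y z hy hz
      rw [map_add, hψadd, show ψfun (fwd B y) = y from hy, show ψfun (fwd B z) = z from hz]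
  · intro x y
    show fwd B (x * y) = fwd B x * fwd B y
    have hpt : ∀ (c : A) (w : (Subring.centralizer (B : Set A))ᵐᵒᵖ) (x : A),
        ((fwd B (c ⊗ₜ w) : EndB B) : Module.End ℤ A) x = c * (x * (w.unop : A)) := by
      intro c w x
      rw [fwd_tmul_coe]
      rfl
    refine TensorProduct.induction_on x ?_ ?_ ?_
    · rw [zero_mul, map_zero, zero_mul]
    · intro a u
      refine TensorProduct.induction_on y ?_ ?_ ?_
      · rw [mul_zero, map_zero, mul_zero]
      · intro a' u'
        rw [Algebra.TensorProduct.tmul_mul_tmul]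
        apply Subtype.ext
        apply LinearMap.ext
        intro x
        show ((fwd B ((a * a') ⊗ₜ (u * u')) : EndB B) : Module.End ℤ A) x
            = ((fwd B (a ⊗ₜ u) * fwd B (a' ⊗ₜ u') : EndB B) : Module.End ℤ A) x
        rw [MulMemClass.coe_mul, Module.End.mul_apply, hpt, hpt, hpt,
          MulOpposite.unop_mul, MulMemClass.coe_mul]
        simp [mul_assoc]
      · intro y z hy hz
        rw [mul_add, map_add, map_add, mul_add, hy, hz]
    · intro w z hw hz
      rw [add_mul, map_add, map_add, add_mul, hw, hz]
  · intro a s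
    exact fwd_tmul_coe B a (MulOpposite.op s)
  · intro f
    rfl

end
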